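/- arXiv:1511.02124 — 8 statements merged into one kernel-verified Lean document; each statement's English description precedes it below -/
import Mathlib

section
/- Let X be a real normed vector space, D ⊆ X a nonempty compact convex set, u₀ ∈ D, and δ ∈ [0,1]; let D_δ := {(1−δ)x + δu₀ : x ∈ D}. Let f : X → ℝ be continuous on D and let ω be a modulus of continuity for f on D. If a point x ∈ D_δ satisfies f(x) − inf_{y ∈ D_δ} f(y) ≤ 2C/(k+2) for some constant C ≥ 0 and integer k ≥ 0, then f(x) − inf_{y ∈ D} f(y) ≤ 2C/(k+2) + ω(δ · diam(D)), where diam(D) is the diameter of D in the norm of X. -/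
/-- Fixed-δ suboptimality bound (Theorem 1): if `x ∈ D_δ` satisfies the Frank-Wolfe
rate `f x - inf_{D_δ} f ≤ 2C/(k+2)`, then its suboptimality over the full set `D`
is bounded by `2C/(k+2) + ω(δ · diam D)`. -/
theorem fixed_delta_suboptimality
    {X : Type*} [NormedAddCommGroup X] [NormedSpace ℝ X]
    (D : Set X) (hDne : D.Nonempty) (hDcomp : IsCompact D) (hDconv : Convex ℝ D)
    (u₀ : X) (hu₀ : u₀ ∈ D) (δ : ℝ) (hδ : δ ∈ Set.Icc (0 : ℝ) 1)
    (f : X → ℝ) (hf : ContinuousOn f D)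
    (ω : ℝ → ℝ)
    (hω_mono : ∀ s t : ℝ, 0 ≤ s → s ≤ t → ω s ≤ ω t)
    (hω_nonneg : ∀ s : ℝ, 0 ≤ s → 0 ≤ ω s)
    (hω_mod : ∀ x ∈ D, ∀ y ∈ D, |f x - f y| ≤ ω ‖x - y‖)
    (C : ℝ) (hC : 0 ≤ C) (k : ℕ)
    (x : X) (hx : x ∈ (fun z => (1 - δ) • z + δ • u₀) '' D)
    (hsub : f x - sInf (f '' ((fun z => (1 - δ) • z + δ • u₀) '' D)) ≤ 2 * C / (k + 2)) :
    f x - sInf (f '' D) ≤ 2 * C / (k + 2) + ω (δ * Metric.diam D) := by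
  obtain ⟨hδ0, hδ1⟩ := hδ
  set g : X → X := fun z => (1 - δ) • z + δ • u₀ with hg
  have hgsub : g '' D ⊆ D := by
    rintro _ ⟨z, hz, rfl⟩
    exact hDconv hz hu₀ (by linarith) hδ0 (by ring)
  -- minimizer on D
  obtain ⟨y, hyD, hymin⟩ := hDcomp.exists_isMinOn hDne hf
  have hInfD : sInf (f '' D) = f y := by
    have hbD : BddBelow (f '' D) := ⟨f y, by rintro _ ⟨z, hz, rfl⟩; exact hymin hz⟩
    have hmem : f y ∈ f '' D := ⟨y, hyD, rfl⟩
    exact le_antisymm (csInf_le hbD hmem)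
      (le_csInf (hDne.image f) (by rintro _ ⟨z, hz, rfl⟩; exact hymin hz))
  -- compactness of D_δ image
  have hgcont : Continuous g := (continuous_id.const_smul (1 - δ)).add continuous_const
  have hcompδ : IsCompact (g '' D) := hDcomp.image hgcont
  have hbdd : BddBelow (f '' (g '' D)) := by
    have : IsCompact (f '' (g '' D)) := hcompδ.image_of_continuousOn (hf.mono hgsub)
    exact this.bddBelow
  have hgy : g y ∈ g '' D := ⟨y, hyD, rfl⟩
  have hInfδ_le : sInf (f '' (g '' D)) ≤ f (g y) := csInf_le hbdd ⟨g y, hgy, rfl⟩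
  have hdist : ‖g y - y‖ ≤ δ * Metric.diam D := by
    have : g y - y = δ • (u₀ - y) := by
      simp only [hg]
      module
    rw [this, norm_smul, Real.norm_eq_abs, abs_of_nonneg hδ0]
    have := hDcomp.isBounded
    have hd : ‖u₀ - y‖ ≤ Metric.diam D := by
      rw [← dist_eq_norm]
      exact Metric.dist_le_diam_of_mem hDcomp.isBounded hu₀ hyD
    exact mul_le_mul_of_nonneg_left hd hδ0
  have hfy : f (g y) - f y ≤ ω (δ * Metric.diam D) := by
    calc f (g y) - f y ≤ |f (g y) - f y| := le_abs_self _
      _ ≤ ω ‖g y - y‖ := hω_mod _ (hgsub hgy) _ hyD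
      _ ≤ ω (δ * Metric.diam D) := hω_mono _ _ (norm_nonneg _) hdist
  rw [hInfD]
  have : sInf (f '' (g '' D)) ≤ f y + ω (δ * Metric.diam D) := by
    apply hInfδ_le.trans; linarith
  linarith
end

section
/- Let a, b, C₀ be real numbers with 1 < a ≤ b and C₀ > 0, and let (h_k)_{k≥0} be a sequence of nonnegative real numbers satisfying h₀^{a−1} ≤ C₀ and the recurrence inequality h_{k+1} ≤ h_k − h_k^a/(b·C₀) for all k ≥ 0. Then for all k ≥ 0, h_k ≤ (C₀ / (((a−1)/b)·k + 1))^{1/(a−1)}. Moreover, whenever h_k > 0 one has h_{k+1} < h_k. -/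
/-!
The recurrence is `h (k + 1) ≤ f (h k)` for the step map `f x = x - x ^ a / (b C₀)`, which is
monotone on `[0, C₀ ^ (1 / (a - 1))]` because `a ≤ b`. Hence, by induction, `h` stays below any
sequence `g` with `h 0 ≤ g 0` and `f (g k) ≤ g (k + 1)`. The solution
`g t = (C₀ / ((a - 1) / b * t + 1)) ^ (1 / (a - 1))` of `g' = -g ^ a / (b C₀)` is such a sequence:
with `x = 1 / (b s)`, where `s = (a - 1) / b * t + 1`, the inequality `f (g t) ≤ g (t + 1)` becomes
`(1 - x) (1 + (a - 1) x) ^ (1 / (a - 1)) ≤ 1`, which follows from `1 - x ≤ exp (-x)` and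
`1 + (a - 1) x ≤ exp ((a - 1) x)`.
-/

open Real Set

theorem le_of_le_map_of_map_le {α : Type*} [Preorder α] {f : α → α} {h g : ℕ → α} {m : α}
    (hm : ∀ k, m ≤ h k) (hf : ∀ k, MonotoneOn f (Icc m (g k)))
    (hh : ∀ k, h (k + 1) ≤ f (h k)) (hg : ∀ k, f (g k) ≤ g (k + 1)) (h0 : h 0 ≤ g 0) :
    ∀ k, h k ≤ g k
  | 0 => h0
  | k + 1 => by
    have ih := le_of_le_map_of_map_le hm hf hh hg h0 k
    calc h (k + 1) ≤ f (h k) := hh k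
      _ ≤ f (g k) := hf k ⟨hm k, ih⟩ ⟨(hm k).trans ih, le_rfl⟩ ih
      _ ≤ g (k + 1) := hg k

theorem monotoneOn_sub_rpow_div {p c y : ℝ} (hp : 1 ≤ p) (hy : p * y ^ (p - 1) ≤ c) :
    MonotoneOn (fun x => x - x ^ p / c) (Icc 0 y) := by
  have hderiv (x : ℝ) : HasDerivAt (fun x => x - x ^ p / c) (1 - p * x ^ (p - 1) / c) x :=
    (hasDerivAt_id x).sub ((hasDerivAt_rpow_const (Or.inr hp)).div_const c)
  refine monotoneOn_of_deriv_nonneg (convex_Icc 0 y)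
    (fun x _ => (hderiv x).continuousAt.continuousWithinAt)
    (fun x _ => (hderiv x).differentiableAt.differentiableWithinAt) fun x hx => ?_
  rw [interior_Icc] at hx
  have hxy : p * x ^ (p - 1) ≤ p * y ^ (p - 1) :=
    mul_le_mul_of_nonneg_left (rpow_le_rpow hx.1.le hx.2.le (sub_nonneg.2 hp)) (by linarith)
  have hc : 0 ≤ c := (mul_nonneg (by linarith) (rpow_nonneg hx.1.le _)).trans (hxy.trans hy)
  rw [(hderiv x).deriv, sub_nonneg]
  exact div_le_one_of_le₀ (hxy.trans hy) hc

theorem one_sub_mul_one_add_mul_rpow_inv_le_one {r x : ℝ} (hr : 0 < r) (hx : 0 ≤ x) :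
    (1 - x) * (1 + r * x) ^ r⁻¹ ≤ 1 := by
  have hpow : (1 + r * x) ^ r⁻¹ ≤ exp x :=
    calc (1 + r * x) ^ r⁻¹ ≤ exp (r * x) ^ r⁻¹ := by
          gcongr
          linarith [add_one_le_exp (r * x)]
      _ = exp x := by rw [← exp_mul, mul_comm r x, mul_inv_cancel_right₀ hr.ne']
  calc (1 - x) * (1 + r * x) ^ r⁻¹ ≤ exp (-x) * (1 + r * x) ^ r⁻¹ := by
        gcongr
        exact one_sub_le_exp_neg x
    _ ≤ exp (-x) * exp x := by gcongr
    _ = 1 := by rw [← exp_add, neg_add_cancel, exp_zero]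

noncomputable def odeSolution (a b C₀ t : ℝ) : ℝ := (C₀ / ((a - 1) / b * t + 1)) ^ (1 / (a - 1))

section odeSolution

variable {a b C₀ t : ℝ}

theorem odeSolution_rpow_sub_one (ha : 1 < a) (hb : 0 < b) (hC₀ : 0 < C₀) (ht : 0 ≤ t) :
    odeSolution a b C₀ t ^ (a - 1) = C₀ / ((a - 1) / b * t + 1) := by
  have : 0 ≤ (a - 1) / b * t := by have := sub_pos.2 ha; positivity
  rw [odeSolution, one_div, rpow_inv_rpow (by positivity) (by linarith)]

theorem odeSolution_sub_rpow_div_le (ha : 1 < a) (hb : 0 < b) (hC₀ : 0 < C₀) (ht : 0 ≤ t) :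
    odeSolution a b C₀ t - odeSolution a b C₀ t ^ a / (b * C₀) ≤ odeSolution a b C₀ (t + 1) := by
  set r := a - 1 with hr_def
  have hr : 0 < r := sub_pos.2 ha
  set s := r / b * t + 1
  have hs : 0 < s := by positivity
  set u := odeSolution a b C₀ t
  have hu : 0 ≤ u := rpow_nonneg (by positivity) _
  have hur : u ^ r = C₀ / s := odeSolution_rpow_sub_one ha hb hC₀ ht
  have hstep : u - u ^ a / (b * C₀) = u * (1 - 1 / (b * s)) := by
    rw [show a = 1 + r by ring, rpow_add' hu (by positivity), rpow_one, hur]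
    field_simp
  have hnext : odeSolution a b C₀ (t + 1) = u / (1 + r * (1 / (b * s))) ^ (1 / r) := by
    have : C₀ / (r / b * (t + 1) + 1) = C₀ / s / (1 + r * (1 / (b * s))) := by
      simp only [s]
      field_simp
      ring
    rw [odeSolution, ← hr_def, this, div_rpow (by positivity) (by positivity)]
    rfl
  rw [hstep, hnext, ← mul_one_div u]
  refine mul_le_mul_of_nonneg_left ?_ hu
  rw [le_div_iff₀ (by positivity), one_div r]
  exact one_sub_mul_one_add_mul_rpow_inv_le_one hr (by positivity)

end odeSolution

/-- Recurrence-inequality solution lemma (Lemma C.4): a nonnegative sequence with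
`h₀^(a-1) ≤ C₀` and `h_{k+1} ≤ h_k - h_k^a/(b C₀)` satisfies
`h_k ≤ (C₀ / ((a-1)/b · k + 1))^(1/(a-1))`, and is strictly decreasing while positive. -/
theorem recurrence_inequality_solution
    (a b C₀ : ℝ) (ha : 1 < a) (hab : a ≤ b) (hC₀ : 0 < C₀)
    (h : ℕ → ℝ) (hnonneg : ∀ k, 0 ≤ h k)
    (hinit : h 0 ^ (a - 1) ≤ C₀)
    (hrec : ∀ k : ℕ, h (k + 1) ≤ h k - h k ^ a / (b * C₀)) :
    (∀ k : ℕ, h k ≤ (C₀ / ((a - 1) / b * k + 1)) ^ (1 / (a - 1))) ∧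
      (∀ k : ℕ, 0 < h k → h (k + 1) < h k) := by
  have hb : 0 < b := by linarith
  have hr : 0 < a - 1 := sub_pos.2 ha
  set g : ℕ → ℝ := fun k => odeSolution a b C₀ k
  have hg_pow (k : ℕ) : g k ^ (a - 1) ≤ C₀ := by
    rw [odeSolution_rpow_sub_one ha hb hC₀ k.cast_nonneg]
    exact div_le_self hC₀.le (le_add_of_nonneg_left (by positivity))
  have hg_nonneg (k : ℕ) : 0 ≤ g k := rpow_nonneg (by positivity) _
  have hmono (k : ℕ) : MonotoneOn (fun x => x - x ^ a / (b * C₀)) (Icc 0 (g k)) :=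
    monotoneOn_sub_rpow_div ha.le <|
      mul_le_mul hab (hg_pow k) (rpow_nonneg (hg_nonneg k) _) hb.le
  have hsuper (k : ℕ) : g k - g k ^ a / (b * C₀) ≤ g (k + 1) := by
    simpa [g] using odeSolution_sub_rpow_div_le ha hb hC₀ k.cast_nonneg
  have hinit' : h 0 ≤ g 0 :=
    calc h 0 = (h 0 ^ (a - 1)) ^ (1 / (a - 1)) := by
          rw [one_div, rpow_rpow_inv (hnonneg 0) hr.ne']
      _ ≤ C₀ ^ (1 / (a - 1)) := rpow_le_rpow (rpow_nonneg (hnonneg 0) _) hinit (by positivity)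
      _ = g 0 := by simp [g, odeSolution]
  exact ⟨le_of_le_map_of_map_le hnonneg hmono hrec hsuper hinit',
    fun k hk => (hrec k).trans_lt (sub_lt_self _ (by positivity))⟩
end

section
/- Let p ≥ 0 and B, C̃ > 0 be real numbers, let 0 < δ₀ ≤ 1/4, and let (h_k)_{k≥0} be a nonincreasing sequence of nonnegative reals such that for every k with h_k > 0 and every γ ∈ [0,1], h_{k+1} ≤ h_k − (γ/2)·h_k + (γ²/2)·C̃/(min(h_k/B, δ₀))^p. Then there exists a constant C > 0 (depending only on h₀, B, C̃, δ₀, and p) such that h_k ≤ C·(k+1)^{−1/(p+1)} for all k ≥ 0. -/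
/-!
Put `α = 1 / (p + 1)` and `C = max (3 h₀, B, 8 C̃ / δ₀ ^ p)`, and induct on `k`. If
`h_k ≤ C (k + 2) ^ (-α)`, monotonicity gives the bound at `k + 1`. Otherwise `h_k` is large, so the
contraction parameter `min (h_k / B, δ₀)` is at least `δ₀ (k + 2) ^ (-α)`, and since `α p = 1 - α`
the curvature term `M = C̃ / min (h_k / B, δ₀) ^ p` is at most `h_k (k + 2) / 8`. Optimizing `γ` in
the recurrence then yields `h_{k+1} ≤ h_k (k + 1) / (k + 2)`, and as `t ↦ t ^ (1 - α)` is increasing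
this propagates `h_k ≤ C (k + 1) ^ (-α)` to `k + 1`.
-/

open Real Set

lemma le_sub_min_of_forall_mem_Icc {h h' M : ℝ} (hh : 0 < h) (hM : 0 < M)
    (hrec : ∀ γ ∈ Icc (0 : ℝ) 1, h' ≤ h - γ / 2 * h + γ ^ 2 / 2 * M) :
    h' ≤ h - min (h / 4) (h ^ 2 / (8 * M)) := by
  -- take `γ = 1` when `2 M ≤ h`, and the unconstrained minimizer `γ = h / (2 M)` otherwise
  rcases le_or_gt (2 * M) h with hMh | hhM
  · have := hrec 1 ⟨zero_le_one, le_rfl⟩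
    have : h' ≤ h - h / 4 := by linarith
    exact this.trans (by gcongr; exact min_le_left _ _)
  · have hγ : h / (2 * M) ∈ Icc (0 : ℝ) 1 :=
      ⟨by positivity, (div_le_one (by positivity)).2 hhM.le⟩
    have := hrec _ hγ
    have : h' ≤ h - h ^ 2 / (8 * M) := by
      convert this using 1; field_simp; ring
    exact this.trans (by gcongr; exact min_le_right _ _)

lemma le_mul_sub_one_div_of_forall_mem_Icc {h h' M s : ℝ} (hh : 0 < h) (hM : 0 < M)
    (hs : 4 ≤ s) (hMs : 8 * M ≤ h * s)
    (hrec : ∀ γ ∈ Icc (0 : ℝ) 1, h' ≤ h - γ / 2 * h + γ ^ 2 / 2 * M) :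
    h' ≤ h * ((s - 1) / s) := by
  calc h' ≤ h - min (h / 4) (h ^ 2 / (8 * M)) := le_sub_min_of_forall_mem_Icc hh hM hrec
    _ ≤ h - h / s := by
      gcongr
      refine le_min (by gcongr) ?_
      rw [div_le_div_iff₀ (by positivity) (by positivity)]
      nlinarith
    _ = h * ((s - 1) / s) := by field_simp

lemma rpow_neg_mul_div_le {a b α : ℝ} (ha : 0 < a) (hab : a ≤ b) (hα : α ≤ 1) :
    a ^ (-α) * (a / b) ≤ b ^ (-α) := by
  have hb : 0 < b := ha.trans_le hab
  calc a ^ (-α) * (a / b) = a ^ (-α + 1) / b := by rw [rpow_add_one ha.ne']; ring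
    _ ≤ b ^ (-α + 1) / b := by gcongr; linarith
    _ = b ^ (-α) := by rw [rpow_add_one hb.ne']; field_simp

lemma le_mul_rpow_neg_of_step {h : ℕ → ℝ} {C α : ℝ} (k₀ : ℕ) (hC : 0 ≤ C) (hα : α ≤ 1)
    (hdecr : ∀ k, h (k + 1) ≤ h k)
    (hinit : ∀ k ≤ k₀, h k ≤ C * ((k : ℝ) + 1) ^ (-α))
    (hstep : ∀ k ≥ k₀, C * ((k : ℝ) + 2) ^ (-α) < h k →
      h (k + 1) ≤ h k * (((k : ℝ) + 1) / ((k : ℝ) + 2))) :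
    ∀ k, h k ≤ C * ((k : ℝ) + 1) ^ (-α) := by
  intro k
  induction k with
  | zero => exact hinit 0 (Nat.zero_le _)
  | succ k ih =>
    rcases le_or_gt (k + 1) k₀ with hk | hk
    · exact hinit _ hk
    have hcast : ((k + 1 : ℕ) : ℝ) + 1 = (k : ℝ) + 2 := by push_cast; ring
    rw [hcast]
    rcases le_or_gt (h k) (C * ((k : ℝ) + 2) ^ (-α)) with hle | hlt
    · exact (hdecr k).trans hle
    calc h (k + 1) ≤ h k * (((k : ℝ) + 1) / ((k : ℝ) + 2)) := hstep k (by omega) hlt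
      _ ≤ C * ((k : ℝ) + 1) ^ (-α) * (((k : ℝ) + 1) / ((k : ℝ) + 2)) := by gcongr
      _ ≤ C * ((k : ℝ) + 2) ^ (-α) := by
        rw [mul_assoc]; gcongr; exact rpow_neg_mul_div_le (by positivity) (by linarith) hα

lemma rpow_neg_one_div_add_one_mul {s p : ℝ} (hs : 0 < s) (hp : 0 ≤ p) :
    (s ^ (-(1 / (p + 1)))) ^ p * (s ^ (-(1 / (p + 1))) * s) = 1 := by
  have ht : s ^ (-(1 / (p + 1))) ≠ 0 := (rpow_pos_of_pos hs _).ne'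
  rw [← mul_assoc, ← rpow_add_one ht, ← rpow_mul hs.le,
    show -(1 / (p + 1)) * (p + 1) = -1 by field_simp, rpow_neg_one, inv_mul_cancel₀ hs.ne']

lemma eight_mul_div_rpow_min_le {p B Ct δ₀ C h s : ℝ} (hp : 0 ≤ p) (hB : 0 < B) (hCt : 0 ≤ Ct)
    (hδ₀ : 0 < δ₀) (hδ₀1 : δ₀ ≤ 1) (hs : 1 ≤ s) (hBC : B ≤ C) (hDC : 8 * (Ct / δ₀ ^ p) ≤ C)
    (hlt : C * s ^ (-(1 / (p + 1))) < h) :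
    8 * (Ct / (min (h / B) δ₀) ^ p) ≤ h * s := by
  set t := s ^ (-(1 / (p + 1)))
  have hs0 : 0 < s := one_pos.trans_le hs
  have ht0 : 0 < t := rpow_pos_of_pos hs0 _
  have ht1 : t ≤ 1 := rpow_le_one_of_one_le_of_nonpos hs (by simp only [neg_nonpos]; positivity)
  have hδt : δ₀ * t ≤ min (h / B) δ₀ := by
    refine le_min ?_ (mul_le_of_le_one_right hδ₀.le ht1)
    calc δ₀ * t ≤ t := mul_le_of_le_one_left ht0.le hδ₀1
      _ ≤ C * t / B := by rw [le_div_iff₀ hB, mul_comm]; gcongr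
      _ ≤ h / B := by gcongr
  have htp : t ^ p * (t * s) = 1 := rpow_neg_one_div_add_one_mul hs0 hp
  calc 8 * (Ct / (min (h / B) δ₀) ^ p) ≤ 8 * (Ct / (δ₀ * t) ^ p) := by gcongr
    _ = 8 * (Ct / δ₀ ^ p) * (t * s) := by
      rw [mul_rpow hδ₀.le ht0.le]
      have : t ^ p ≠ 0 := (rpow_pos_of_pos ht0 p).ne'
      field_simp
      linear_combination (-Ct) * htp
    _ ≤ C * t * s := by rw [mul_assoc C]; gcongr
    _ ≤ h * s := by gcongr

theorem adaptive_delta_convergence_rate_general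
    (p B Ct δ₀ : ℝ) (hp : 0 ≤ p) (hB : 0 < B) (hCt : 0 < Ct)
    (hδ₀ : 0 < δ₀) (hδ₀' : δ₀ ≤ 1 / 4)
    (h : ℕ → ℝ) (hdecr : ∀ k, h (k + 1) ≤ h k)
    (hrec : ∀ k : ℕ, 0 < h k → ∀ γ ∈ Set.Icc (0 : ℝ) 1,
      h (k + 1) ≤ h k - γ / 2 * h k + γ ^ 2 / 2 * Ct / (min (h k / B) δ₀) ^ p) :
    ∃ C > 0, ∀ k : ℕ, h k ≤ C * ((k : ℝ) + 1) ^ (-(1 / (p + 1))) := by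
  set C := max (max (3 * h 0) B) (8 * (Ct / δ₀ ^ p))
  have hC : 0 < C := lt_max_of_lt_right (by positivity)
  have hh₀C : 3 * h 0 ≤ C := (le_max_left _ _).trans (le_max_left _ _)
  have hα : 1 / (p + 1) ≤ 1 := (div_le_one (by linarith)).2 (by linarith)
  refine ⟨C, hC, le_mul_rpow_neg_of_step 2 hC.le hα hdecr (fun k hk => ?_) (fun k hk hlt => ?_)⟩
  · have hk3 : (k : ℝ) + 1 ≤ 3 := by norm_cast; omega
    calc h k ≤ h 0 := antitone_nat_of_succ_le hdecr (Nat.zero_le k)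
      _ ≤ C * 3⁻¹ := by linarith
      _ ≤ C * ((k : ℝ) + 1)⁻¹ := by gcongr
      _ ≤ C * ((k : ℝ) + 1) ^ (-(1 / (p + 1))) := by
        rw [← rpow_neg_one]
        gcongr
        exact le_add_of_nonneg_left k.cast_nonneg
  · have hs : (4 : ℝ) ≤ k + 2 := by norm_cast; omega
    have hpos : 0 < h k := lt_of_le_of_lt (by positivity) hlt
    have hμ : 0 < min (h k / B) δ₀ := lt_min (by positivity) hδ₀
    set M := Ct / (min (h k / B) δ₀) ^ p
    have h8M : 8 * M ≤ h k * (k + 2) := eight_mul_div_rpow_min_le hp hB hCt.le hδ₀ (by linarith)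
      (by linarith) ((le_max_right _ _).trans (le_max_left _ _)) (le_max_right _ _) hlt
    refine (le_mul_sub_one_div_of_forall_mem_Icc hpos (div_pos hCt (rpow_pos_of_pos hμ p)) hs h8M
      fun γ hγ => (hrec k hpos γ hγ).trans_eq (by rw [mul_div_assoc])).trans_eq (by ring)

/-- Sequence form of the global convergence theorem for the adaptive-δ Frank-Wolfe
variant (Theorem 2): from the master recurrence inequality one deduces the
`O(k^{-1/(p+1)})` suboptimality rate. -/
theorem adaptive_delta_convergence_rate
    (p B Ct δ₀ : ℝ) (hp : 0 ≤ p) (hB : 0 < B) (hCt : 0 < Ct)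
    (hδ₀ : 0 < δ₀) (hδ₀' : δ₀ ≤ 1 / 4)
    (h : ℕ → ℝ) (hnonneg : ∀ k, 0 ≤ h k) (hdecr : ∀ k, h (k + 1) ≤ h k)
    (hrec : ∀ k : ℕ, 0 < h k → ∀ γ ∈ Set.Icc (0 : ℝ) 1,
      h (k + 1) ≤ h k - γ / 2 * h k + γ ^ 2 / 2 * Ct / (min (h k / B) δ₀) ^ p) :
    ∃ C > 0, ∀ k : ℕ, h k ≤ C * ((k : ℝ) + 1) ^ (-(1 / (p + 1))) :=
  adaptive_delta_convergence_rate_general p B Ct δ₀ hp hB hCt hδ₀ hδ₀' h hdecr hrec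
end

section
/- Let B > 0 and δ_init > 0 be real numbers, let (h_k)_{k≥0} be a nonincreasing sequence of nonnegative reals, let (g_k)_{k≥0} be a sequence of reals with g_k ≥ h_k for all k, and let (δ_k)_{k≥0} be a sequence of reals with δ₀ = δ_init such that for every k ≥ 1, either δ_k = δ_{k−1}, or g_k/B ≤ δ_k ≤ δ_{k−1}. Then for all k ≥ 0, min(h_k/B, δ_init) ≤ δ_k ≤ δ_init. -/
/-- Lower bound on the adaptive contraction parameter: if `δ` is either kept or
decreased to a value at least `g_k/B` at each step, then `δ_k` never falls below
`min(h_k/B, δ_init)`, and never exceeds `δ_init`. -/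
theorem adaptive_delta_lower_bound
    (B δinit : ℝ) (hB : 0 < B) (hδinit : 0 < δinit)
    (h : ℕ → ℝ) (hnonneg : ∀ k, 0 ≤ h k) (hdecr : ∀ k, h (k + 1) ≤ h k)
    (g : ℕ → ℝ) (hg : ∀ k, h k ≤ g k)
    (δ : ℕ → ℝ) (hδ0 : δ 0 = δinit)
    (hupd : ∀ k : ℕ, δ (k + 1) = δ k ∨ (g (k + 1) / B ≤ δ (k + 1) ∧ δ (k + 1) ≤ δ k)) :
    ∀ k : ℕ, min (h k / B) δinit ≤ δ k ∧ δ k ≤ δinit := by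
  intro k
  induction k with
  | zero => simp [hδ0]
  | succ k ih =>
    rcases hupd k with heq | ⟨hge, hle⟩
    · rw [heq]
      refine ⟨le_trans ?_ ih.1, ih.2⟩
      exact min_le_min (div_le_div_of_nonneg_right (hdecr k) hB.le) le_rfl
    · refine ⟨le_trans (min_le_left _ _) ?_, le_trans hle ih.2⟩
      exact le_trans (div_le_div_of_nonneg_right (hg (k+1)) hB.le) hge
end

section
/- Let K, θ ∈ ℝ and define g : ℝ → ℝ by g(x) := −K·x·log x + θ·x (with the convention x·log x = 0 at x = 0). Let σ > 0 and let x, x′ ∈ [0,1] with |x − x′| ≤ σ. Then |g(x′) − g(x)| ≤ σ·|θ| + 2σ·|K|·max(−log(2σ), 1). -/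
private lemma small_bound {σ t : ℝ} (hσ : 0 < σ)
    (ht0 : 0 ≤ t) (ht2 : t ≤ 2 * σ) (ht1 : t ≤ 1) :
    -(t * Real.log t) ≤ 2 * σ * max (-Real.log (2 * σ)) 1 := by
  set M := max (-Real.log (2 * σ)) 1 with hM
  have hM1 : 1 ≤ M := le_max_right _ _
  rcases eq_or_lt_of_le ht0 with h0 | h0
  · rw [← h0]; simp; positivity
  by_cases hlog : -Real.log t ≤ M
  · have hlt : Real.log t ≤ 0 := Real.log_nonpos ht0 ht1
    nlinarith [mul_le_mul_of_nonneg_left hlog ht0]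
  · push_neg at hlog
    set u := -Real.log t with hu
    have htexp : t = Real.exp (-u) := by rw [hu, neg_neg, Real.exp_log h0]
    have hMσ : Real.exp (-M) ≤ 2 * σ := by
      have h1 : -M ≤ Real.log (2 * σ) := by
        linarith [le_max_left (-Real.log (2 * σ)) 1]
      calc Real.exp (-M) ≤ Real.exp (Real.log (2 * σ)) := Real.exp_le_exp.mpr h1
        _ = 2 * σ := Real.exp_log (by positivity)
    have key : u * Real.exp (-u) ≤ M * Real.exp (-M) := by
      have hE : Real.exp (-u) * Real.exp (u - M) = Real.exp (-M) := by
        rw [← Real.exp_add]; ring_nf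
      have h1 : 1 + (u - M) ≤ Real.exp (u - M) := by
        linarith [Real.add_one_le_exp (u - M)]
      nlinarith [Real.exp_pos (-u), Real.exp_pos (u - M),
        mul_nonneg (mul_nonneg (le_of_lt (Real.exp_pos (-u))) (by linarith : (0:ℝ) ≤ M - 1))
          (by linarith : (0:ℝ) ≤ u - M),
        mul_nonneg (mul_nonneg (by linarith : (0:ℝ) ≤ M) (le_of_lt (Real.exp_pos (-u))))
          (by linarith : (0:ℝ) ≤ Real.exp (u - M) - (1 + (u - M)))]
    have : -(t * Real.log t) = u * Real.exp (-u) := by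
      rw [← htexp, hu]; ring
    rw [this]
    calc u * Real.exp (-u) ≤ M * Real.exp (-M) := key
      _ ≤ M * (2 * σ) := by
          apply mul_le_mul_of_nonneg_left hMσ (by linarith)
      _ = 2 * σ * M := by ring

private lemma entropy_diff (σ a b : ℝ) (hσ : 0 < σ) (ha : 0 ≤ a) (hab : a ≤ b)
    (hb1 : b ≤ 1) (hd : b - a ≤ σ) :
    |b * Real.log b - a * Real.log a| ≤ 2 * σ * max (-Real.log (2 * σ)) 1 := by
  set M := max (-Real.log (2 * σ)) 1 with hM
  have hM1 : 1 ≤ M := le_max_right _ _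
  by_cases hcase : σ ≤ a
  · -- Lipschitz on [σ, 1]
    have hσ1 : σ ≤ 1 := le_trans hcase (le_trans hab hb1)
    have hlog2 : Real.log 2 ≤ 1 := by
      have := Real.log_le_sub_one_of_pos (by norm_num : (0:ℝ) < 2)
      linarith
    have hlogσ : -Real.log σ ≤ M + 1 := by
      have h2σ : Real.log (2 * σ) = Real.log 2 + Real.log σ :=
        Real.log_mul (by norm_num) (ne_of_gt hσ)
      have h3 : -Real.log (2 * σ) ≤ M := le_max_left _ _
      rw [h2σ] at h3
      linarith
    have hbound : ∀ t ∈ Set.Icc σ (1:ℝ), ‖Real.log t + 1‖ ≤ 2 * M := by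
      intro t ht
      have htpos : 0 < t := lt_of_lt_of_le hσ ht.1
      have h1 : Real.log t ≤ 0 := Real.log_nonpos htpos.le ht.2
      have h2 : Real.log σ ≤ Real.log t := Real.log_le_log hσ ht.1
      rw [Real.norm_eq_abs, abs_le]
      constructor <;> linarith
    have hderiv : ∀ t ∈ Set.Icc σ (1:ℝ),
        HasDerivWithinAt (fun t => t * Real.log t) (Real.log t + 1) (Set.Icc σ 1) t := by
      intro t ht
      exact (Real.hasDerivAt_mul_log (ne_of_gt (lt_of_lt_of_le hσ ht.1))).hasDerivWithinAt
    have := (convex_Icc σ (1:ℝ)).norm_image_sub_le_of_norm_hasDerivWithin_le hderiv hbound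
      (Set.mem_Icc.mpr ⟨hcase, le_trans hab hb1⟩) (Set.mem_Icc.mpr ⟨le_trans hcase hab, hb1⟩)
    rw [Real.norm_eq_abs, Real.norm_eq_abs] at this
    have hba : |b - a| = b - a := abs_of_nonneg (by linarith)
    rw [hba] at this
    calc |b * Real.log b - a * Real.log a| ≤ 2 * M * (b - a) := this
      _ ≤ 2 * M * σ := by nlinarith
      _ = 2 * σ * M := by ring
  · push_neg at hcase
    have hb2σ : b ≤ 2 * σ := by linarith
    have ha2σ : a ≤ 2 * σ := by linarith
    have ha1 : a ≤ 1 := le_trans hab hb1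
    have hA := small_bound hσ ha ha2σ ha1
    have hB := small_bound hσ (le_trans ha hab) hb2σ hb1
    have hAneg : a * Real.log a ≤ 0 :=
      mul_nonpos_of_nonneg_of_nonpos ha (Real.log_nonpos ha ha1)
    have hBneg : b * Real.log b ≤ 0 :=
      mul_nonpos_of_nonneg_of_nonpos (le_trans ha hab) (Real.log_nonpos (le_trans ha hab) hb1)
    rw [abs_le]
    constructor <;> linarith

/-- Scalar modulus-of-continuity lemma for an entropy plus linear term (Lemma E.1):
for `g(x) = −K·x·log x + θ·x` on `[0,1]` (with `x·log x = 0` at `x = 0`, consistent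
with `Real.log 0 = 0`), points at distance at most `σ` have
`|g(x') − g(x)| ≤ σ|θ| + 2σ|K|·max(−log(2σ), 1)`. -/
theorem entropy_plus_linear_modulus
    (K θ σ : ℝ) (hσ : 0 < σ)
    (x x' : ℝ) (hx : x ∈ Set.Icc (0 : ℝ) 1) (hx' : x' ∈ Set.Icc (0 : ℝ) 1)
    (hdist : |x - x'| ≤ σ) :
    |(-K * x' * Real.log x' + θ * x') - (-K * x * Real.log x + θ * x)| ≤
      σ * |θ| + 2 * σ * |K| * max (-Real.log (2 * σ)) 1 := by
  set M := max (-Real.log (2 * σ)) 1 with hM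
  obtain ⟨hd1, hd2⟩ := abs_le.mp hdist
  have hent : |x' * Real.log x' - x * Real.log x| ≤ 2 * σ * M := by
    rcases le_total x x' with h | h
    · exact entropy_diff σ x x' hσ hx.1 h hx'.2 (by linarith)
    · rw [abs_sub_comm]
      exact entropy_diff σ x' x hσ hx'.1 h hx.2 (by linarith)
  have hkey : (-K * x' * Real.log x' + θ * x') - (-K * x * Real.log x + θ * x)
      = -K * (x' * Real.log x' - x * Real.log x) + θ * (x' - x) := by ring
  rw [hkey]
  have hdist' : |x' - x| ≤ σ := by rw [abs_sub_comm]; exact hdist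
  calc |(-K) * (x' * Real.log x' - x * Real.log x) + θ * (x' - x)|
      ≤ |(-K) * (x' * Real.log x' - x * Real.log x)| + |θ * (x' - x)| := abs_add_le _ _
    _ = |K| * |x' * Real.log x' - x * Real.log x| + |θ| * |x' - x| := by
        rw [abs_mul, abs_mul, abs_neg]
    _ ≤ |K| * (2 * σ * M) + |θ| * σ :=
        add_le_add (mul_le_mul_of_nonneg_left hent (abs_nonneg K))
          (mul_le_mul_of_nonneg_left hdist' (abs_nonneg θ))
    _ = σ * |θ| + 2 * σ * |K| * M := by ring
end

section
/- Let ι be a finite index set, let K, θ : ι → ℝ, and define f(μ) := Σ_{i∈ι} (−K_i·μ_i·log μ_i + θ_i·μ_i) for μ : ι → ℝ (with the convention x·log x = 0 at x = 0). Let σ > 0 and let μ, μ′ : ι → [0,1] satisfy |μ_i − μ′_i| ≤ σ for all i ∈ ι. Then |f(μ) − f(μ′)| ≤ σ·(Σ_{i∈ι} |θ_i|) + 2σ·(Σ_{i∈ι} |K_i|)·max(−log(2σ), 1). -/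
open Real

-- monotonicity of -t log t on (0, e⁻¹]-like region
private lemma aux_mono {t s : ℝ} (ht : 0 < t) (hts : t ≤ s) (hs : Real.log s ≤ -1) :
    -(t * Real.log t) ≤ -(s * Real.log s) := by
  have hs0 : 0 < s := lt_of_lt_of_le ht hts
  have h1 : Real.log (s / t) ≤ s / t - 1 := Real.log_le_sub_one_of_pos (by positivity)
  have h2 : Real.log (s / t) = Real.log s - Real.log t :=
    Real.log_div (ne_of_gt hs0) (ne_of_gt ht)
  have h3 : t * Real.log (s / t) ≤ s - t := by
    have h4 := mul_le_mul_of_nonneg_left h1 ht.le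
    have h5 : t * (s / t) = s := by field_simp
    nlinarith
  have h6 : t * Real.log s - t * Real.log t ≤ s - t := by
    rw [h2, mul_sub] at h3; linarith
  have h7 : (s - t) * (Real.log s + 1) ≤ 0 :=
    mul_nonpos_of_nonneg_of_nonpos (by linarith) (by linarith)
  nlinarith

private lemma aux_inv_exp {t : ℝ} (ht0 : 0 ≤ t) : -(t * Real.log t) ≤ Real.exp (-1) := by
  rcases eq_or_lt_of_le ht0 with h | h
  · simp [← h]; positivity
  · have h1 : Real.log (t⁻¹ * Real.exp (-1)) ≤ t⁻¹ * Real.exp (-1) - 1 :=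
      Real.log_le_sub_one_of_pos (by positivity)
    have h2 : Real.log (t⁻¹ * Real.exp (-1)) = -Real.log t + (-1) := by
      rw [Real.log_mul (by positivity) (by positivity), Real.log_inv, Real.log_exp]
    have h3 : -Real.log t ≤ t⁻¹ * Real.exp (-1) := by linarith
    have h4 := mul_le_mul_of_nonneg_left h3 h.le
    have h5 : t * (t⁻¹ * Real.exp (-1)) = Real.exp (-1) := by field_simp
    nlinarith

private lemma lemA {σ t : ℝ} (hσ : 0 < σ) (ht0 : 0 ≤ t) (hts : t ≤ 2 * σ) :
    -(t * Real.log t) ≤ 2 * σ * max (-Real.log (2 * σ)) 1 := by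
  have hM1 : (1 : ℝ) ≤ max (-Real.log (2 * σ)) 1 := le_max_right _ _
  rcases eq_or_lt_of_le ht0 with h | h
  · simp [← h]; positivity
  rcases le_or_gt (Real.log (2 * σ)) (-1) with hc | hc
  · have h1 := aux_mono h hts hc
    have h2 : -Real.log (2 * σ) ≤ max (-Real.log (2 * σ)) 1 := le_max_left _ _
    nlinarith
  · have h1 := aux_inv_exp ht0
    have h2 : Real.exp (-1) < 2 * σ := by
      have := Real.exp_lt_exp.mpr hc
      rwa [Real.exp_log (by positivity)] at this
    nlinarith

-- subadditivity: a log a + b log b ≤ (a+b) log (a+b) for a,b ≥ 0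
private lemma aux_subadd {a b : ℝ} (ha : 0 ≤ a) (hb : 0 ≤ b) :
    a * Real.log a + b * Real.log b ≤ (a + b) * Real.log (a + b) := by
  have h1 : a * Real.log a ≤ a * Real.log (a + b) := by
    rcases eq_or_lt_of_le ha with h | h
    · simp [← h]
    · exact mul_le_mul_of_nonneg_left (Real.log_le_log h (by linarith)) ha
  have h2 : b * Real.log b ≤ b * Real.log (a + b) := by
    rcases eq_or_lt_of_le hb with h | h
    · simp [← h]
    · exact mul_le_mul_of_nonneg_left (Real.log_le_log h (by linarith)) hb
  nlinarith [h1, h2]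

-- tangent: y log y - x log x ≤ (log y + 1)(y - x) for 0 ≤ x ≤ y
private lemma aux_tangent {x y : ℝ} (hx : 0 ≤ x) (hxy : x ≤ y) :
    y * Real.log y - x * Real.log x ≤ (Real.log y + 1) * (y - x) := by
  rcases eq_or_lt_of_le (hx.trans hxy) with hy | hy
  · have hx0 : x = 0 := le_antisymm (hxy.trans hy.ge) hx
    simp [← hy, hx0]
  rcases eq_or_lt_of_le hx with h | h
  · simp [← h]; nlinarith
  · have h1 : Real.log (y / x) ≤ y / x - 1 := Real.log_le_sub_one_of_pos (by positivity)
    have h2 : Real.log (y / x) = Real.log y - Real.log x :=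
      Real.log_div (ne_of_gt hy) (ne_of_gt h)
    have h3 : x * Real.log (y / x) ≤ y - x := by
      have h4 := mul_le_mul_of_nonneg_left h1 h.le
      have h5 : x * (y / x) = y := by field_simp
      nlinarith
    rw [h2, mul_sub] at h3
    nlinarith

private lemma keyOrd {σ x y : ℝ} (hσ : 0 < σ) (hx0 : 0 ≤ x) (hxy : x ≤ y) (hy1 : y ≤ 1)
    (hd : y - x ≤ σ) :
    |x * Real.log x - y * Real.log y| ≤ 2 * σ * max (-Real.log (2 * σ)) 1 := by
  have hM1 : (1 : ℝ) ≤ max (-Real.log (2 * σ)) 1 := le_max_right _ _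
  rw [abs_sub_le_iff]
  constructor
  · -- x log x - y log y ≤ bound
    have hsub := aux_subadd hx0 (sub_nonneg.mpr hxy)
    have hxx : x + (y - x) = y := by ring
    rw [hxx] at hsub
    have hA := lemA hσ (sub_nonneg.mpr hxy) (by linarith : y - x ≤ 2 * σ)
    linarith
  · -- y log y - x log x ≤ bound
    have ht := aux_tangent hx0 hxy
    have hly : Real.log y ≤ 0 := Real.log_nonpos (hx0.trans hxy) hy1
    have h2 : (Real.log y + 1) * (y - x) ≤ 1 * (y - x) :=
      mul_le_mul_of_nonneg_right (by linarith) (by linarith)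
    nlinarith

private lemma key {σ x y : ℝ} (hσ : 0 < σ) (hx : x ∈ Set.Icc (0:ℝ) 1) (hy : y ∈ Set.Icc (0:ℝ) 1)
    (hd : |x - y| ≤ σ) :
    |x * Real.log x - y * Real.log y| ≤ 2 * σ * max (-Real.log (2 * σ)) 1 := by
  rcases le_total x y with h | h
  · exact keyOrd hσ hx.1 h hy.2 (by rw [abs_sub_comm] at hd; exact (abs_le.mp hd).2.trans_eq' (by ring) |>.trans_eq (by ring))
  · rw [abs_sub_comm]
    exact keyOrd hσ hy.1 h hx.2 ((abs_le.mp hd).2.trans_eq' (by ring) |>.trans_eq (by ring))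

open Finset in
/-- Modulus-of-continuity bound for a weighted sum of entropy and linear terms
(Lemma E.2): for `f(μ) = Σᵢ (−Kᵢ μᵢ log μᵢ + θᵢ μᵢ)` with `μᵢ, μ′ᵢ ∈ [0,1]` and
`|μᵢ − μ′ᵢ| ≤ σ`, we have `|f(μ) − f(μ′)| ≤ σ‖θ‖₁ + 2σ‖K‖₁·max(−log(2σ), 1)`. -/
theorem sum_entropy_modulus
    {ι : Type*} [Fintype ι] (K θ : ι → ℝ) (σ : ℝ) (hσ : 0 < σ)
    (μ μ' : ι → ℝ)
    (hμ : ∀ i, μ i ∈ Set.Icc (0 : ℝ) 1) (hμ' : ∀ i, μ' i ∈ Set.Icc (0 : ℝ) 1)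
    (hdist : ∀ i, |μ i - μ' i| ≤ σ) :
    |(∑ i, (-K i * μ i * Real.log (μ i) + θ i * μ i)) -
        (∑ i, (-K i * μ' i * Real.log (μ' i) + θ i * μ' i))| ≤
      σ * (∑ i, |θ i|) + 2 * σ * (∑ i, |K i|) * max (-Real.log (2 * σ)) 1 := by
  set M := max (-Real.log (2 * σ)) 1 with hM
  rw [← Finset.sum_sub_distrib]
  calc |∑ i, ((-K i * μ i * Real.log (μ i) + θ i * μ i) -
        (-K i * μ' i * Real.log (μ' i) + θ i * μ' i))|
      ≤ ∑ i, |(-K i * μ i * Real.log (μ i) + θ i * μ i) -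
        (-K i * μ' i * Real.log (μ' i) + θ i * μ' i)| := Finset.abs_sum_le_sum_abs _ _
    _ ≤ ∑ i, (σ * |θ i| + 2 * σ * |K i| * M) := by
        apply Finset.sum_le_sum
        intro i _
        have h1 : (-K i * μ i * Real.log (μ i) + θ i * μ i) -
            (-K i * μ' i * Real.log (μ' i) + θ i * μ' i) =
            (-K i) * (μ i * Real.log (μ i) - μ' i * Real.log (μ' i)) + θ i * (μ i - μ' i) := by
          ring
        rw [h1]
        calc |(-K i) * (μ i * Real.log (μ i) - μ' i * Real.log (μ' i)) + θ i * (μ i - μ' i)|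
            ≤ |(-K i) * (μ i * Real.log (μ i) - μ' i * Real.log (μ' i))| + |θ i * (μ i - μ' i)| :=
              abs_add_le _ _
          _ = |K i| * |μ i * Real.log (μ i) - μ' i * Real.log (μ' i)| + |θ i| * |μ i - μ' i| := by
              rw [abs_mul, abs_mul, abs_neg]
          _ ≤ |K i| * (2 * σ * M) + |θ i| * σ := by
              gcongr
              · exact key hσ (hμ i) (hμ' i) (hdist i)
              · exact hdist i
          _ = σ * |θ i| + 2 * σ * |K i| * M := by ring
    _ = σ * (∑ i, |θ i|) + 2 * σ * (∑ i, |K i|) * M := by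
        rw [Finset.sum_add_distrib, ← Finset.mul_sum]
        have h2 : ∑ x, 2 * σ * |K x| * M = 2 * σ * M * ∑ x, |K x| := by
          rw [Finset.mul_sum]
          exact Finset.sum_congr rfl fun i _ => by ring
        rw [h2]; ring
end

section
/- Let n ≥ 1 be an integer, K ≥ 0 a real number, and θ : Fin n → ℝ. Let x : Fin n → ℝ satisfy x_i > 0 for all i and Σ_i x_i = 1, and let u₀ : Fin n → ℝ be the uniform vector u₀_i = 1/n. Then Σ_{i} (K·(1 + log x_i) − θ_i)·(u₀_i − x_i) ≤ 2·max_i |θ_i|. -/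
/-- Bound on the negative uniform gap of the TRW objective on a single
probability-simplex block (Lemma E.3): for `f(μ) = K·Σ μᵢ log μᵢ − Σ θᵢ μᵢ` with
`K ≥ 0`, a point `x` in the interior of the simplex, and the uniform vector
`u₀ᵢ = 1/n`, one has `⟨∇f(x), u₀ − x⟩ ≤ 2·maxᵢ |θᵢ|`. -/
theorem trw_negative_uniform_gap_block
    (n : ℕ) (hn : 1 ≤ n) (K : ℝ) (hK : 0 ≤ K) (θ : Fin n → ℝ)
    (x : Fin n → ℝ) (hx : ∀ i, 0 < x i) (hsum : ∑ i, x i = 1) :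
    ∑ i, (K * (1 + Real.log (x i)) - θ i) * (1 / (n : ℝ) - x i) ≤
      2 * Finset.univ.sup' ⟨⟨0, hn⟩, Finset.mem_univ _⟩ (fun i => |θ i|) := by
  have hn0 : (0:ℝ) < n := by exact_mod_cast hn
  set u : ℝ := 1 / (n : ℝ) with hu
  have hu0 : 0 < u := by positivity
  set M := Finset.univ.sup' ⟨⟨0, hn⟩, Finset.mem_univ _⟩ (fun i => |θ i|) with hM
  have hMle : ∀ i, |θ i| ≤ M := fun i => Finset.le_sup' (fun j => |θ j|) (Finset.mem_univ i)
  have key : ∀ i ∈ Finset.univ, (K * (1 + Real.log (x i)) - θ i) * (u - x i)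
      ≤ K * (1 + Real.log u) * (u - x i) + M * (x i + u) := by
    intro i _
    have h1 : K * (1 + Real.log (x i)) * (u - x i)
        ≤ K * (1 + Real.log u) * (u - x i) := by
      have hlog : (Real.log (x i) - Real.log u) * (u - x i) ≤ 0 := by
        rcases le_total (x i) u with h | h
        · exact mul_nonpos_of_nonpos_of_nonneg
            (by simpa using sub_nonpos.2 (Real.log_le_log (hx i) h))
            (by linarith)
        · exact mul_nonpos_of_nonneg_of_nonpos
            (by simpa using sub_nonneg.2 (Real.log_le_log hu0 h))
            (by linarith)
      nlinarith [mul_nonneg hK (neg_nonneg.2 hlog)]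
    have h2 : -(θ i) * (u - x i) ≤ M * (x i + u) := by
      have := hMle i
      have habs : -(θ i) * (u - x i) ≤ |θ i| * |u - x i| := by
        calc -(θ i) * (u - x i) ≤ |(-(θ i)) * (u - x i)| := le_abs_self _
          _ = |θ i| * |u - x i| := by rw [abs_mul, abs_neg]
      have habs2 : |u - x i| ≤ x i + u := by
        rw [abs_sub_le_iff]
        constructor <;> nlinarith [hx i, hu0]
      calc -(θ i) * (u - x i) ≤ |θ i| * |u - x i| := habs
        _ ≤ M * (x i + u) := by
            apply mul_le_mul this habs2 (abs_nonneg _)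
            exact le_trans (abs_nonneg _) this
    nlinarith [h1, h2]
  calc ∑ i, (K * (1 + Real.log (x i)) - θ i) * (u - x i)
      ≤ ∑ i, (K * (1 + Real.log u) * (u - x i) + M * (x i + u)) :=
        Finset.sum_le_sum key
    _ = K * (1 + Real.log u) * (∑ i, (u - x i)) + M * (∑ i, (x i + u)) := by
        rw [Finset.sum_add_distrib, ← Finset.mul_sum, ← Finset.mul_sum]
    _ = 2 * M := by
        have h1 : ∑ _i : Fin n, u = 1 := by
          simp [Finset.sum_const, hu]
          field_simp
        have h2 : ∑ i, (u - x i) = 0 := by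
          rw [Finset.sum_sub_distrib, h1, hsum]; ring
        have h3 : ∑ i, (x i + u) = 2 := by
          rw [Finset.sum_add_distrib, h1, hsum]; norm_num
        rw [h2, h3]; ring
end

section
/- Let p ≥ 0 and F > 0 be real numbers, and let (h_k)_{k≥0} be a sequence of nonnegative reals satisfying h₀^{p+1} ≤ F and h_{k+1} ≤ h_k − h_k^{p+2}/(max(8, p+2)·F) for all k ≥ 0. Then for all k ≥ 0, h_k ≤ (F / (((p+1)/max(8, p+2))·k + 1))^{1/(p+1)}. -/
/-!
Put `u_k = h_k^{p+1}` and `x_k = h_k^{p+1}/(bF)` with `b = max 8 (p+2)`. The recurrence reads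
`h_{k+1} ≤ h_k (1 - x_k)`, and by Bernoulli `(1 - x)^{p+1} (1 + (p+1) x) ≤ (1 - x²)^{p+1} ≤ 1`, so
`u_{k+1} ≤ u_k / (1 + r u_k)` with `r = (p+1)/(bF)`. The map `u ↦ u / (1 + r u)` is monotone and sends
`F / (F r k + 1)` to `F / (F r (k+1) + 1)`, which gives `u_k ≤ F / (F r k + 1)` by induction.
-/

open Real

lemma one_sub_rpow_le_inv_one_add_mul {x q : ℝ} (hx₀ : 0 ≤ x) (hx₁ : x ≤ 1) (hq : 1 ≤ q) :
    (1 - x) ^ q ≤ (1 + q * x)⁻¹ := by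
  have hpos : 0 < 1 + q * x := by nlinarith
  rw [← one_div, le_div_iff₀ hpos]
  calc (1 - x) ^ q * (1 + q * x) ≤ (1 - x) ^ q * (1 + x) ^ q := by
        gcongr
        exact one_add_mul_self_le_rpow_one_add (by linarith) hq
    _ = (1 - x ^ 2) ^ q := by rw [← mul_rpow (by linarith) (by linarith)]; ring_nf
    _ ≤ 1 := rpow_le_one (by nlinarith) (by nlinarith) (by linarith)

lemma div_one_add_mul_le_div_one_add_mul {r u v : ℝ} (hr : 0 ≤ r) (hu : 0 ≤ u) (huv : u ≤ v) :
    u / (1 + r * u) ≤ v / (1 + r * v) := by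
  rw [div_le_div_iff₀ (by positivity) (by nlinarith)]
  nlinarith

lemma le_div_mul_add_one_of_le_div_one_add_mul {r A : ℝ} {u : ℕ → ℝ} (hr : 0 ≤ r) (hA : 0 ≤ A)
    (hu : ∀ k, 0 ≤ u k) (h0 : u 0 ≤ A) (hrec : ∀ k, u (k + 1) ≤ u k / (1 + r * u k)) (k : ℕ) :
    u k ≤ A / (A * r * k + 1) := by
  induction k with
  | zero => simpa using h0
  | succ k ih =>
    calc u (k + 1) ≤ u k / (1 + r * u k) := hrec k
      _ ≤ A / (A * r * k + 1) / (1 + r * (A / (A * r * k + 1))) :=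
        div_one_add_mul_le_div_one_add_mul hr (hu k) ih
      _ = A / (A * r * ↑(k + 1) + 1) := by
        have : 0 < A * r * k + 1 := by positivity
        push_cast
        field_simp
        ring

lemma rpow_le_div_one_add_mul_of_le_sub_rpow {q c y z : ℝ} (hq : 1 ≤ q) (hc : 0 < c) (hy : 0 ≤ y)
    (hz : 0 ≤ z) (hzy : z ≤ y - y ^ (q + 1) / c) :
    z ^ q ≤ y ^ q / (1 + q / c * y ^ q) := by
  set x := y ^ q / c
  have hzy : z ≤ y * (1 - x) := by
    rw [rpow_add_one' hy (by linarith), mul_div_right_comm] at hzy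
    linarith
  by_cases hx : x ≤ 1
  · calc z ^ q ≤ (y * (1 - x)) ^ q := rpow_le_rpow hz hzy (by linarith)
      _ = y ^ q * (1 - x) ^ q := mul_rpow hy (by linarith)
      _ ≤ y ^ q * (1 + q * x)⁻¹ := by
        gcongr
        exact one_sub_rpow_le_inv_one_add_mul (by positivity) hx hq
      _ = y ^ q / (1 + q / c * y ^ q) := by ring
  · have hz0 : z = 0 := by nlinarith
    rw [hz0, zero_rpow (by linarith)]
    positivity

/-- Stage-3 bound of the adaptive-δ convergence theorem (Theorem C.5): a
nonnegative sequence with `h₀^{p+1} ≤ F` and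
`h_{k+1} ≤ h_k − h_k^{p+2}/(max(8, p+2)·F)` satisfies
`h_k ≤ (F / (((p+1)/max(8, p+2))·k + 1))^{1/(p+1)}`. -/
theorem stage3_recurrence_bound
    (p F : ℝ) (hp : 0 ≤ p) (hF : 0 < F)
    (h : ℕ → ℝ) (hnonneg : ∀ k, 0 ≤ h k)
    (hinit : h 0 ^ (p + 1) ≤ F)
    (hrec : ∀ k : ℕ, h (k + 1) ≤ h k - h k ^ (p + 2) / (max 8 (p + 2) * F)) :
    ∀ k : ℕ, h k ≤ (F / ((p + 1) / max 8 (p + 2) * k + 1)) ^ (1 / (p + 1)) := by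
  intro k
  set b := max 8 (p + 2)
  have hb : 0 < b := lt_of_lt_of_le (by norm_num) (le_max_left _ _)
  have hq : 1 ≤ p + 1 := by linarith
  have hc : 0 < b * F := mul_pos hb hF
  have hpow : ∀ k, h k ^ (p + 1) ≤ F / (F * ((p + 1) / (b * F)) * k + 1) :=
    le_div_mul_add_one_of_le_div_one_add_mul (by positivity) hF.le
      (fun k => rpow_nonneg (hnonneg k) _) hinit fun k =>
        rpow_le_div_one_add_mul_of_le_sub_rpow hq hc (hnonneg k) (hnonneg (k + 1))
          (by simpa only [add_assoc, one_add_one_eq_two] using hrec k)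
  rw [one_div, le_rpow_inv_iff_of_pos (hnonneg k) (by positivity) (by linarith)]
  convert hpow k using 4
  field_simp
end
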